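/- For every d ∈ ℕ: (a) every element of the partition P(d+1) is either contained in V_{d+1} or disjoint from it, so V_{d+1} is a union of elements of P(d+1); and (b) if ω, ω′ ∈ Ω lie in the same element of the partition P(d)_2 and neither ω nor ω′ belongs to V_{d+1}, then ω and ω′ lie in the same element of P(d+1). -/

import Mathlib

open MeasureTheory Set Filter
open scoped ENNReal

noncomputable section

/-- The vector `(x 0, …, x d)` has ordinal pattern `π = (π 0, …, π d)`. -/
def HasOrdinalPattern {d : ℕ} (x : Fin (d + 1) → ℝ) (π : Equiv.Perm (Fin (d + 1))) : Prop :=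
  ∀ l : Fin d, x (π l.succ) < x (π l.castSucc) ∨
    (x (π l.castSucc) = x (π l.succ) ∧ π l.succ < π l.castSucc)

/-- The element `P_π` of the ordinal partition `P(d)` of order `d`:
points `ω ∈ Ω` such that `(T^[d] ω, T^[d-1] ω, …, T ω, ω)` has ordinal pattern `π`. -/
def ordCell (Ω : Set ℝ) (T : ℝ → ℝ) (d : ℕ) (π : Equiv.Perm (Fin (d + 1))) : Set ℝ :=
  {ω ∈ Ω | HasOrdinalPattern (fun i => T^[d - (i : ℕ)] ω) π}

/-- The element `P_{π₁…π_n}` of the partition `P(d)_n` corresponding to the `(n,d)`-word `w`. -/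
def wordCell (Ω : Set ℝ) (T : ℝ → ℝ) (d n : ℕ)
    (w : Fin n → Equiv.Perm (Fin (d + 1))) : Set ℝ :=
  {ω | ∀ i : Fin n, T^[(i : ℕ)] ω ∈ ordCell Ω T d (w i)}

/-- The set `V_d`. -/
def Vset (Ω : Set ℝ) (T : ℝ → ℝ) (d : ℕ) : Set ℝ :=
  {ω ∈ Ω |
    (ω < T^[d] ω ∧ ∀ l : ℕ, 1 ≤ l → l ≤ d - 1 → T^[l] ω ∉ Set.Ioo ω (T^[d] ω)) ∨
    (T^[d] ω ≤ ω ∧ ∀ l : ℕ, 1 ≤ l → l ≤ d - 1 → T^[l] ω ∉ Set.Icc (T^[d] ω) ω)}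

/-- The entropy `H(P(d))` of the ordinal partition of order `d`. -/
def ordEntropy (μ : Measure ℝ) (Ω : Set ℝ) (T : ℝ → ℝ) (d : ℕ) : ℝ :=
  ∑ π : Equiv.Perm (Fin (d + 1)), Real.negMulLog (μ (ordCell Ω T d π)).toReal

/-- The entropy `H(P(d)_n)` of the partition into `(n,d)`-word cells. -/
def wordEntropy (μ : Measure ℝ) (Ω : Set ℝ) (T : ℝ → ℝ) (d n : ℕ) : ℝ :=
  ∑ w : Fin n → Equiv.Perm (Fin (d + 1)), Real.negMulLog (μ (wordCell Ω T d n w)).toReal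

/-- `T` is (strong-)mixing with respect to `μ`. -/
def Mixing (μ : Measure ℝ) (T : ℝ → ℝ) : Prop :=
  ∀ A B : Set ℝ, MeasurableSet A → MeasurableSet B →
    Tendsto (fun n => μ (T^[n] ⁻¹' A ∩ B)) atTop (nhds (μ A * μ B))

/-- `T` is ergodic with respect to `μ`. -/
def IsErgodicMap (μ : Measure ℝ) (T : ℝ → ℝ) : Prop :=
  ∀ B : Set ℝ, MeasurableSet B → T ⁻¹' B = B → μ B = 0 ∨ μ B = 1

/-- The set `Ṽ_d(A)`. -/
def Vtilde (A : Set ℝ) (T : ℝ → ℝ) (d : ℕ) : Set ℝ :=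
  {ω ∈ A |
    (∀ l : ℕ, 1 ≤ l → l ≤ d - 1 → T^[l] ω ∉ {a ∈ A | a < ω}) ∨
    (∀ l : ℕ, 1 ≤ l → l ≤ d - 1 → T^[l] ω ∉ {a ∈ A | ω < a})}

/-!
Order the indices of a vector `x` by the key `(x i, i)`; the tie-breaking rule of ordinal patterns
says exactly that the pattern lists the indices in decreasing key order. For
`x = (T^[d+1] ω, …, T ω, ω)`, membership of `ω` in `V_{d+1}` says that no key lies strictly between
the keys of the first and the last index, so it depends only on the pattern of `x`. The cell
of `ω` in `P(d)_2` fixes the key order on all indices but the first and on all indices but the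
last. Only the comparison of the first with the last index is left open, and if `ω ∉ V_{d+1}` it is
forced by transitivity through an index whose key lies between them.
-/

open Function

section ComparisonTransfer

variable {ι α β : Type*} [LinearOrder α] [LinearOrder β] {f : ι → α} {g : ι → β}

lemma mem_uIoo_iff_of_lt_iff_lt (hfg : ∀ i j, f i < f j ↔ g i < g j) (a b c : ι) :
    f c ∈ uIoo (f a) (f b) ↔ g c ∈ uIoo (g a) (g b) := by
  simp only [uIoo_eq_union, mem_union, mem_Ioo, hfg]

lemma lt_iff_lt_of_exists_mem_uIoo {a b : ι}
    (ha : ∀ i j, i ≠ a → j ≠ a → (f i < f j ↔ g i < g j))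
    (hb : ∀ i j, i ≠ b → j ≠ b → (f i < f j ↔ g i < g j))
    (hab : ∃ c, f c ∈ uIoo (f a) (f b)) (i j : ι) : f i < f j ↔ g i < g j := by
  obtain ⟨c, hc⟩ := hab
  have hne : a ≠ b := by rintro rfl; simp at hc
  have neq {x y : ι} (h : f x < f y) : x ≠ y := fun e => h.ne (congrArg f e)
  have through {a b : ι} (ha : ∀ i j, i ≠ a → j ≠ a → (f i < f j ↔ g i < g j))
      (hb : ∀ i j, i ≠ b → j ≠ b → (f i < f j ↔ g i < g j))
      (hac : f a < f c) (hcb : f c < f b) : g a < g b :=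
    ((hb a c (neq (hac.trans hcb)) (neq hcb)).mp hac).trans
      ((ha c b (neq hac).symm (neq (hac.trans hcb)).symm).mp hcb)
  have hab : (f a < f b ↔ g a < g b) ∧ (f b < f a ↔ g b < g a) := by
    rw [uIoo_eq_union] at hc
    rcases hc with ⟨hac, hcb⟩ | ⟨hbc, hca⟩
    · have hlt := through ha hb hac hcb
      exact ⟨iff_of_true (hac.trans hcb) hlt,
        iff_of_false (hac.trans hcb).not_gt hlt.not_gt⟩
    · have hlt := through hb ha hbc hca
      exact ⟨iff_of_false (hbc.trans hca).not_gt hlt.not_gt,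
        iff_of_true (hbc.trans hca) hlt⟩
  by_cases hia : i ≠ a ∧ j ≠ a
  · exact ha i j hia.1 hia.2
  by_cases hib : i ≠ b ∧ j ≠ b
  · exact hb i j hib.1 hib.2
  rw [not_and_or, not_not, not_not] at hia hib
  rcases hia with rfl | rfl <;> rcases hib with rfl | rfl
  exacts [absurd rfl hne, hab.1, hab.2, absurd rfl hne]

end ComparisonTransfer

section OrdinalKey

variable {ι κ α : Type*}

def ordKey (x : ι → α) (i : ι) : α ×ₗ ι := toLex (x i, i)

lemma ordKey_injective (x : ι → α) : Injective (ordKey x) :=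
  fun _ _ h => congrArg (fun p => (ofLex p).2) h

variable [LinearOrder ι] [LinearOrder κ] [LinearOrder α]

lemma ordKey_lt_ordKey_iff (x : ι → α) {i j : ι} :
    ordKey x i < ordKey x j ↔ x i < x j ∨ x i = x j ∧ i < j :=
  Prod.Lex.lt_iff

lemma ordKey_lt_ordKey_iff_le (x : ι → α) {i j : ι} (h : i < j) :
    ordKey x i < ordKey x j ↔ x i ≤ x j := by
  rw [ordKey_lt_ordKey_iff, le_iff_lt_or_eq, and_iff_left h]

lemma ordKey_lt_ordKey_iff_lt (x : ι → α) {i j : ι} (h : j < i) :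
    ordKey x i < ordKey x j ↔ x i < x j := by
  simp [ordKey_lt_ordKey_iff, h.not_gt]

lemma ordKey_comp_lt_iff (x : ι → α) {f : κ → ι} (hf : StrictMono f) {i j : κ} :
    ordKey (x ∘ f) i < ordKey (x ∘ f) j ↔ ordKey x (f i) < ordKey x (f j) := by
  simp only [ordKey_lt_ordKey_iff, comp_apply, hf.lt_iff_lt]

lemma ordKey_mem_uIoo_iff (x : ι → α) {i j k : ι} (hij : i < j) (hjk : j < k) :
    ordKey x j ∈ uIoo (ordKey x i) (ordKey x k) ↔
      (x k < x i ∧ x j ∈ Ioo (x k) (x i)) ∨ (x i ≤ x k ∧ x j ∈ Icc (x i) (x k)) := by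
  by_cases hki : x k < x i
  · rw [uIoo_of_gt ((ordKey_lt_ordKey_iff_lt x (hij.trans hjk)).mpr hki), mem_Ioo,
      ordKey_lt_ordKey_iff_lt x hjk, ordKey_lt_ordKey_iff_lt x hij]
    simp [hki, hki.not_ge]
  · rw [not_lt] at hki
    rw [uIoo_of_lt ((ordKey_lt_ordKey_iff_le x (hij.trans hjk)).mpr hki), mem_Ioo,
      ordKey_lt_ordKey_iff_le x hjk, ordKey_lt_ordKey_iff_le x hij]
    simp [hki, hki.not_gt]

end OrdinalKey

section OrdinalPattern

variable {d : ℕ} {x y : Fin (d + 1) → ℝ} {π : Equiv.Perm (Fin (d + 1))}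

lemma hasOrdinalPattern_iff_strictAnti : HasOrdinalPattern x π ↔ StrictAnti (ordKey x ∘ π) := by
  rw [Fin.strictAnti_iff_succ_lt]
  refine forall_congr' fun l => ?_
  simp only [comp_apply, ordKey_lt_ordKey_iff, eq_comm]

lemma HasOrdinalPattern.ordKey_lt_iff_symm_lt (h : HasOrdinalPattern x π) (i j : Fin (d + 1)) :
    ordKey x i < ordKey x j ↔ π.symm j < π.symm i := by
  simpa using (hasOrdinalPattern_iff_strictAnti.mp h).lt_iff_gt (a := π.symm i) (b := π.symm j)

lemma HasOrdinalPattern.of_ordKey_lt_iff (h : HasOrdinalPattern x π)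
    (hxy : ∀ i j, ordKey x i < ordKey x j ↔ ordKey y i < ordKey y j) : HasOrdinalPattern y π := by
  rw [hasOrdinalPattern_iff_strictAnti] at h ⊢
  exact fun a b hab => (hxy _ _).mp (h hab)

lemma HasOrdinalPattern.ordKey_lt_iff_of_comp {x y : Fin (d + 2) → ℝ} {f : Fin (d + 1) → Fin (d + 2)}
    (hf : StrictMono f) (hx : HasOrdinalPattern (x ∘ f) π) (hy : HasOrdinalPattern (y ∘ f) π)
    (i j : Fin (d + 1)) : ordKey x (f i) < ordKey x (f j) ↔ ordKey y (f i) < ordKey y (f j) := by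
  rw [← ordKey_comp_lt_iff x hf, ← ordKey_comp_lt_iff y hf, hx.ordKey_lt_iff_symm_lt,
    hy.ordKey_lt_iff_symm_lt]

lemma exists_hasOrdinalPattern (x : Fin (d + 1) → ℝ) : ∃ π, HasOrdinalPattern x π := by
  have hsort : StrictMono (ordKey x ∘ Tuple.sort (ordKey x)) :=
    (Tuple.monotone_sort _).strictMono_of_injective
      ((ordKey_injective x).comp (Equiv.injective _))
  refine ⟨Tuple.sort (ordKey x) * Fin.revPerm, hasOrdinalPattern_iff_strictAnti.mpr ?_⟩
  rw [Equiv.Perm.coe_mul]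
  exact hsort.comp_strictAnti Fin.rev_strictAnti

end OrdinalPattern

section Orbit

variable {Ω : Set ℝ} {T : ℝ → ℝ} {d : ℕ} {ω ω' : ℝ}

def orbitVec (T : ℝ → ℝ) (d : ℕ) (ω : ℝ) : Fin (d + 1) → ℝ := fun i => T^[d - i] ω

lemma orbitVec_comp_succ : orbitVec T (d + 1) ω ∘ Fin.succ = orbitVec T d ω := by
  funext i
  simp [orbitVec]

lemma orbitVec_comp_castSucc : orbitVec T (d + 1) ω ∘ Fin.castSucc = orbitVec T d (T ω) := by
  funext i
  simp only [orbitVec, comp_apply, Fin.val_castSucc, ← iterate_succ_apply]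
  congr 1
  omega

lemma forall_orbitVec_interior_iff (P : ℝ → Prop) :
    (∀ j : Fin (d + 2), 0 < j → j < Fin.last (d + 1) → P (orbitVec T (d + 1) ω j)) ↔
      ∀ l, 1 ≤ l → l ≤ d → P (T^[l] ω) := by
  simp only [Fin.lt_def, Fin.val_zero, Fin.val_last]
  constructor
  · intro h l hl hld
    simpa [orbitVec, Nat.sub_sub_self (by omega : l ≤ d + 1)] using
      h ⟨d + 1 - l, by omega⟩ (by simp only; omega) (by simp only; omega)
  · intro h j hj0 hjl
    exact h _ (by omega) (by omega)

lemma mem_Vset_iff :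
    ω ∈ Vset Ω T (d + 1) ↔ ω ∈ Ω ∧ ∀ j, ordKey (orbitVec T (d + 1) ω) j ∉
      uIoo (ordKey (orbitVec T (d + 1) ω) 0) (ordKey (orbitVec T (d + 1) ω) (Fin.last (d + 1))) := by
  set x := orbitVec T (d + 1) ω
  have hx0 : x 0 = T^[d + 1] ω := rfl
  have hxl : x (Fin.last (d + 1)) = ω := by simp [x, orbitVec]
  set R : ℝ → Prop := fun y => (ω < T^[d + 1] ω ∧ y ∈ Ioo ω (T^[d + 1] ω)) ∨
    (T^[d + 1] ω ≤ ω ∧ y ∈ Icc (T^[d + 1] ω) ω)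
  have hinterior : ∀ j, 0 < j → j < Fin.last (d + 1) →
      (ordKey x j ∈ uIoo (ordKey x 0) (ordKey x (Fin.last (d + 1))) ↔ R (x j)) := by
    intro j hj0 hjl
    rw [ordKey_mem_uIoo_iff x hj0 hjl, hx0, hxl]
  have hends : (∀ j, ordKey x j ∉ uIoo (ordKey x 0) (ordKey x (Fin.last (d + 1)))) ↔
      ∀ j, 0 < j → j < Fin.last (d + 1) → ¬ R (x j) := by
    refine ⟨fun h j hj0 hjl => (hinterior j hj0 hjl).not.mp (h j), fun h j => ?_⟩
    rcases eq_or_ne j 0 with rfl | hj0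
    · exact left_notMem_uIoo
    rcases eq_or_ne j (Fin.last (d + 1)) with rfl | hjl
    · exact right_notMem_uIoo
    exact (hinterior j (Fin.pos_iff_ne_zero.mpr hj0) (Fin.lt_last_iff_ne_last.mpr hjl)).not.mpr
      (h j (Fin.pos_iff_ne_zero.mpr hj0) (Fin.lt_last_iff_ne_last.mpr hjl))
  rw [hends, forall_orbitVec_interior_iff (fun y => ¬ R y)]
  show ω ∈ Ω ∧ _ ↔ _
  refine and_congr_right fun _ => ?_
  simp only [Nat.add_sub_cancel, R]
  generalize T^[d + 1] ω = t
  by_cases h : ω < t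
  · simp [h, h.not_ge]
  · simp [h, not_lt.mp h]

lemma mem_Vset_of_mem_ordCell {π : Equiv.Perm (Fin (d + 2))} (hω : ω ∈ ordCell Ω T (d + 1) π)
    (hω' : ω' ∈ ordCell Ω T (d + 1) π) (hV : ω ∈ Vset Ω T (d + 1)) : ω' ∈ Vset Ω T (d + 1) := by
  rw [mem_Vset_iff] at hV ⊢
  have hkey : ∀ i j, ordKey (orbitVec T (d + 1) ω) i < ordKey (orbitVec T (d + 1) ω) j ↔
      ordKey (orbitVec T (d + 1) ω') i < ordKey (orbitVec T (d + 1) ω') j := fun i j =>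
    (hω.2.ordKey_lt_iff_symm_lt i j).trans (hω'.2.ordKey_lt_iff_symm_lt i j).symm
  exact ⟨hω'.1, fun j => (mem_uIoo_iff_of_lt_iff_lt hkey _ _ j).not.mp (hV.2 j)⟩

lemma ordCell_subset_Vset_or_inter_eq_empty (π : Equiv.Perm (Fin (d + 2))) :
    ordCell Ω T (d + 1) π ⊆ Vset Ω T (d + 1) ∨ ordCell Ω T (d + 1) π ∩ Vset Ω T (d + 1) = ∅ := by
  rcases (ordCell Ω T (d + 1) π ∩ Vset Ω T (d + 1)).eq_empty_or_nonempty with h | ⟨ω, hω, hV⟩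
  · exact Or.inr h
  · exact Or.inl fun ω' hω' => mem_Vset_of_mem_ordCell hω hω' hV

lemma exists_mem_ordCell (hω : ω ∈ Ω) : ∃ π, ω ∈ ordCell Ω T d π :=
  (exists_hasOrdinalPattern _).imp fun _ h => ⟨hω, h⟩

lemma Vset_eq_biUnion_ordCell :
    Vset Ω T (d + 1) =
      ⋃ π ∈ {π | ordCell Ω T (d + 1) π ⊆ Vset Ω T (d + 1)}, ordCell Ω T (d + 1) π := by
  ext ω
  simp only [mem_iUnion, mem_ofPred_eq, exists_prop]
  constructor
  · intro hV
    obtain ⟨π, hπ⟩ := exists_mem_ordCell (d := d + 1) (T := T) hV.1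
    refine ⟨π, (ordCell_subset_Vset_or_inter_eq_empty π).resolve_right ?_, hπ⟩
    exact (nonempty_of_mem (mem_inter hπ hV)).ne_empty
  · rintro ⟨π, hsub, hπ⟩
    exact hsub hπ

lemma exists_mem_ordCell_of_mem_wordCell {w : Fin 2 → Equiv.Perm (Fin (d + 1))}
    (hω : ω ∈ wordCell Ω T d 2 w) (hω' : ω' ∈ wordCell Ω T d 2 w) (hV : ω ∉ Vset Ω T (d + 1)) :
    ∃ π, ω ∈ ordCell Ω T (d + 1) π ∧ ω' ∈ ordCell Ω T (d + 1) π := by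
  set x := orbitVec T (d + 1) ω
  set x' := orbitVec T (d + 1) ω'
  have hsucc : ∀ i j, i ≠ 0 → j ≠ 0 → (ordKey x i < ordKey x j ↔ ordKey x' i < ordKey x' j) := by
    intro i j hi hj
    obtain ⟨i, rfl⟩ := Fin.exists_succ_eq_of_ne_zero hi
    obtain ⟨j, rfl⟩ := Fin.exists_succ_eq_of_ne_zero hj
    refine HasOrdinalPattern.ordKey_lt_iff_of_comp (π := w 0) Fin.strictMono_succ ?_ ?_ i j <;>
      rw [orbitVec_comp_succ]
    exacts [(hω 0).2, (hω' 0).2]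
  have hcastSucc : ∀ i j, i ≠ Fin.last (d + 1) → j ≠ Fin.last (d + 1) →
      (ordKey x i < ordKey x j ↔ ordKey x' i < ordKey x' j) := by
    intro i j hi hj
    obtain ⟨i, rfl⟩ := Fin.exists_castSucc_eq.mpr hi
    obtain ⟨j, rfl⟩ := Fin.exists_castSucc_eq.mpr hj
    refine HasOrdinalPattern.ordKey_lt_iff_of_comp (π := w 1) Fin.strictMono_castSucc ?_ ?_ i j <;>
      rw [orbitVec_comp_castSucc]
    exacts [(hω 1).2, (hω' 1).2]
  have hmid : ∃ c, ordKey x c ∈ uIoo (ordKey x 0) (ordKey x (Fin.last (d + 1))) := by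
    by_contra! h
    exact hV (mem_Vset_iff.mpr ⟨(hω 0).1, h⟩)
  obtain ⟨π, hπ⟩ := exists_hasOrdinalPattern x
  exact ⟨π, ⟨(hω 0).1, hπ⟩, (hω' 0).1,
    hπ.of_ordKey_lt_iff (lt_iff_lt_of_exists_mem_uIoo hsucc hcastSucc hmid)⟩

end Orbit

theorem Vset_union_of_ordCells_and_word_determines_cell_general
    (Ω : Set ℝ) (T : ℝ → ℝ) (d : ℕ) :
    (∀ π : Equiv.Perm (Fin (d + 2)),
      ordCell Ω T (d + 1) π ⊆ Vset Ω T (d + 1) ∨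
        ordCell Ω T (d + 1) π ∩ Vset Ω T (d + 1) = ∅) ∧
    (∃ S : Set (Equiv.Perm (Fin (d + 2))),
      Vset Ω T (d + 1) = ⋃ π ∈ S, ordCell Ω T (d + 1) π) ∧
    (∀ ω ω' : ℝ, ω ∈ Ω → ω' ∈ Ω →
      (∃ w : Fin 2 → Equiv.Perm (Fin (d + 1)),
        ω ∈ wordCell Ω T d 2 w ∧ ω' ∈ wordCell Ω T d 2 w) →
      ω ∉ Vset Ω T (d + 1) → ω' ∉ Vset Ω T (d + 1) →
      ∃ π : Equiv.Perm (Fin (d + 2)),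
        ω ∈ ordCell Ω T (d + 1) π ∧ ω' ∈ ordCell Ω T (d + 1) π) :=
  ⟨ordCell_subset_Vset_or_inter_eq_empty, ⟨_, Vset_eq_biUnion_ordCell⟩,
    fun _ _ _ _ ⟨_, hω, hω'⟩ hV _ => exists_mem_ordCell_of_mem_wordCell hω hω' hV⟩

/-- (a) every element of `P(d+1)` is contained in or disjoint from
`V_{d+1}`, so `V_{d+1}` is a union of elements of `P(d+1)`; (b) if `ω, ω'` lie in the
same element of `P(d)_2` and neither belongs to `V_{d+1}`, then they lie in the same
element of `P(d+1)`. -/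
theorem Vset_union_of_ordCells_and_word_determines_cell
    (Ω : Set ℝ) (hΩ : Ω.OrdConnected)
    (μ : MeasureTheory.Measure ℝ) [MeasureTheory.IsProbabilityMeasure μ] (hμΩ : μ Ω = 1)
    (hatom : ∀ ω ∈ Ω, μ {ω} = 0)
    (T : ℝ → ℝ) (hTmeas : Measurable T) (hTmaps : Set.MapsTo T Ω Ω)
    (hTpres : ∀ B : Set ℝ, MeasurableSet B → μ (T ⁻¹' B) = μ B)
    (d : ℕ) :
    (∀ π : Equiv.Perm (Fin (d + 2)),
      ordCell Ω T (d + 1) π ⊆ Vset Ω T (d + 1) ∨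
        ordCell Ω T (d + 1) π ∩ Vset Ω T (d + 1) = ∅) ∧
    (∃ S : Set (Equiv.Perm (Fin (d + 2))),
      Vset Ω T (d + 1) = ⋃ π ∈ S, ordCell Ω T (d + 1) π) ∧
    (∀ ω ω' : ℝ, ω ∈ Ω → ω' ∈ Ω →
      (∃ w : Fin 2 → Equiv.Perm (Fin (d + 1)),
        ω ∈ wordCell Ω T d 2 w ∧ ω' ∈ wordCell Ω T d 2 w) →
      ω ∉ Vset Ω T (d + 1) → ω' ∉ Vset Ω T (d + 1) →
      ∃ π : Equiv.Perm (Fin (d + 2)),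
        ω ∈ ordCell Ω T (d + 1) π ∧ ω' ∈ ordCell Ω T (d + 1) π) :=
  Vset_union_of_ordCells_and_word_determines_cell_general Ω T d

end
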